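/- arXiv:2211.11689 — 3 statements merged into one kernel-verified Lean document; each statement's English description precedes it below -/
import Mathlib

section
/- For every x ∈ (0,1), one has h(x²)/(x·h(x)) ≥ h(φ²)/(φ·h(φ)) = 1/φ; that is, the function x ↦ h(x²)/(x·h(x)) on (0,1) attains its minimum at x = φ, where the minimum value is 1/φ. -/
/-!
Since `binEnt = binEntropy / log 2` and `1 / ((√5 - 1) / 2) = φ`, the claim is
`φ · x · H(x) ≤ H(x²)` for the natural binary entropy `H`, with equality at `x = φ⁻¹` because
`φ⁻² = 1 - φ⁻¹` and `H(1 - y) = H(y)`.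

For `s ≤ 2` and `0 ≤ x < 1`, `H(x²) - s · x · H(x)` is a combination of `log x`, `log (1 - x)` and
`log (1 + x)` with nonpositive coefficients, so upper bounds on the three logarithms give a lower
bound. Each logarithm is bounded by the quintic Taylor polynomial of `log (1 + t)` (an upper bound
for every odd degree) after rescaling its argument. For `x ≤ 2/5` and `x ≥ 15/16` the inequality
holds with room to spare even with `φ` replaced by `81/50`. On `[2/5, 15/16]` the arguments are
rescaled by `φ`, `φ²` and `φ⁻¹`, which centres all three expansions at the minimiser `x = φ⁻¹`; the
lower bound is then `(φx - 1)²` times a polynomial that is positive on the interval.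
-/

/-- The binary entropy function (base 2), with `h 0 = h 1 = 0`
(note `Real.logb 2 0 = 0` by convention). -/
noncomputable def binEnt (x : ℝ) : ℝ :=
  -(x * Real.logb 2 x) - (1 - x) * Real.logb 2 (1 - x)

open Real Finset
open scoped goldenRatio

noncomputable def logTaylor (n : ℕ) (t : ℝ) : ℝ :=
  ∑ i ∈ range n, (-1) ^ i * t ^ (i + 1) / (i + 1)

theorem logTaylor_five (t : ℝ) :
    logTaylor 5 t = t - t ^ 2 / 2 + t ^ 3 / 3 - t ^ 4 / 4 + t ^ 5 / 5 := by
  simp only [logTaylor, sum_range_succ, sum_range_zero]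
  push_cast
  ring

theorem hasDerivAt_logTaylor (n : ℕ) (t : ℝ) :
    HasDerivAt (logTaylor n) (∑ i ∈ range n, (-t) ^ i) t := by
  refine (HasDerivAt.fun_sum fun i _ =>
    ((hasDerivAt_pow (i + 1) t).const_mul ((-1 : ℝ) ^ i)).div_const ((i : ℝ) + 1)).congr_deriv
    (sum_congr rfl fun i _ => ?_)
  rw [neg_pow]
  push_cast
  field_simp
  ring

theorem hasDerivAt_logTaylor_sub_log {n : ℕ} (hn : Odd n) {t : ℝ} (ht : -1 < t) :
    HasDerivAt (fun s => logTaylor n s - log (1 + s)) (t ^ n / (1 + t)) t := by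
  have h1t : 1 + t ≠ 0 := by linarith
  refine ((hasDerivAt_logTaylor n t).sub (((hasDerivAt_id t).const_add 1).log h1t)).congr_deriv ?_
  have hgeom := geom_sum_mul (-t) n
  rw [hn.neg_pow] at hgeom
  rw [id, eq_div_iff h1t, sub_mul, div_mul_cancel₀ 1 h1t]
  linear_combination -hgeom

theorem log_le_logTaylor {n : ℕ} (hn : Odd n) {y : ℝ} (hy : 0 < y) :
    log y ≤ logTaylor n (y - 1) := by
  set F := fun s => logTaylor n s - log (1 + s)
  have hF : ∀ s, -1 < s → HasDerivAt F (s ^ n / (1 + s)) s := fun s hs =>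
    hasDerivAt_logTaylor_sub_log hn hs
  have hF0 : F 0 = 0 := by simp [F, logTaylor]
  suffices 0 ≤ F (y - 1) by simpa [F] using this
  rcases lt_trichotomy (y - 1) 0 with hneg | hzero | hpos
  · obtain ⟨c, ⟨hc₁, hc₂⟩, hc⟩ := exists_hasDerivAt_eq_slope F _ hneg
      (fun s hs => (hF s (by linarith [hs.1])).continuousAt.continuousWithinAt)
      (fun s hs => hF s (by linarith [hs.1]))
    have hderiv : c ^ n / (1 + c) < 0 := div_neg_of_neg_of_pos (hn.pow_neg hc₂) (by linarith)
    rw [hF0, eq_div_iff (by linarith)] at hc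
    nlinarith [mul_pos_of_neg_of_neg hderiv hneg]
  · simp [hzero, hF0]
  · obtain ⟨c, ⟨hc₁, -⟩, hc⟩ := exists_hasDerivAt_eq_slope F _ hpos
      (fun s hs => (hF s (by linarith [hs.1])).continuousAt.continuousWithinAt)
      (fun s hs => hF s (by linarith [hs.1]))
    have hderiv : 0 < c ^ n / (1 + c) := by positivity
    rw [hF0, eq_div_iff (by linarith)] at hc
    nlinarith [mul_pos hderiv hpos]

theorem log_le_logTaylor_mul_sub_log {n : ℕ} (hn : Odd n) {k y : ℝ} (hk : 0 < k) (hy : 0 < y) :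
    log y ≤ logTaylor n (k * y - 1) - log k := by
  have h := log_le_logTaylor hn (mul_pos hk hy)
  rw [log_mul hk.ne' hy.ne'] at h
  linarith

theorem goldenRatio_gt_d3 : 1.618 < φ := by
  have : 2.236 < √5 := by rw [lt_sqrt (by norm_num)]; norm_num
  unfold goldenRatio
  linarith

theorem goldenRatio_lt_d4 : φ < 1.6181 := by
  have : √5 < 2.2362 := by rw [sqrt_lt' (by norm_num)]; norm_num
  unfold goldenRatio
  linarith

theorem inv_goldenRatio_eq_sub_one : φ⁻¹ = φ - 1 := by
  rw [inv_goldenRatio, goldenConj]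
  ring

theorem log_goldenRatio_gt : 12 / 25 < log φ := by
  have h := log_le_logTaylor (n := 5) (by decide) (inv_pos.2 goldenRatio_pos)
  rw [log_inv, inv_goldenRatio_eq_sub_one, logTaylor_five] at h
  have hA : 0 ≤ φ - 1.618 := by linarith [goldenRatio_gt_d3]
  have hB : 0 ≤ 1.6181 - φ := by linarith [goldenRatio_lt_d4]
  nlinarith [mul_nonneg (pow_nonneg hA 5) (pow_nonneg hB 0),
    mul_nonneg (pow_nonneg hA 4) (pow_nonneg hB 1), mul_nonneg (pow_nonneg hA 3) (pow_nonneg hB 2),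
    mul_nonneg (pow_nonneg hA 2) (pow_nonneg hB 3), mul_nonneg (pow_nonneg hA 1) (pow_nonneg hB 4),
    mul_nonneg (pow_nonneg hA 0) (pow_nonneg hB 5)]

noncomputable def sqEntropyGap (s x a b c : ℝ) : ℝ :=
  -(2 - s) * x ^ 2 * a - (1 - x) * (1 + x - s * x) * b - (1 - x ^ 2) * c

theorem binEntropy_sq_sub_mul_binEntropy (s : ℝ) {x : ℝ} (h₁ : x ≠ 1) (h₂ : x ≠ -1) :
    binEntropy (x ^ 2) - s * x * binEntropy x =
      sqEntropyGap s x (log x) (log (1 - x)) (log (1 + x)) := by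
  have hsq : log (1 - x ^ 2) = log (1 - x) + log (1 + x) := by
    rw [← log_mul (sub_ne_zero.2 h₁.symm) (by contrapose! h₂; linarith)]
    ring_nf
  simp only [binEntropy, sqEntropyGap, log_inv, log_pow, hsq]
  push_cast
  ring

theorem mul_binEntropy_le_binEntropy_sq_of_log_le {s x a b c : ℝ} (hs : s ≤ 2) (hx₀ : 0 ≤ x)
    (hx₁ : x < 1) (ha : log x ≤ a) (hb : log (1 - x) ≤ b) (hc : log (1 + x) ≤ c)
    (h : 0 ≤ sqEntropyGap s x a b c) : s * x * binEntropy x ≤ binEntropy (x ^ 2) := by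
  have hgap := binEntropy_sq_sub_mul_binEntropy s hx₁.ne (by linarith)
  have hca : 0 ≤ (2 - s) * x ^ 2 := by positivity
  have hcb : 0 ≤ (1 - x) * (1 + x - s * x) := mul_nonneg (by linarith) (by nlinarith)
  have hcc : 0 ≤ 1 - x ^ 2 := by nlinarith
  unfold sqEntropyGap at hgap h
  nlinarith [mul_le_mul_of_nonneg_left ha hca, mul_le_mul_of_nonneg_left hb hcb,
    mul_le_mul_of_nonneg_left hc hcc]

theorem sqEntropyGap_nonneg_of_le_two_fifths {x : ℝ} (hx₀ : 0 ≤ x) (hx : x ≤ 2 / 5) :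
    0 ≤ sqEntropyGap (81 / 50) x (logTaylor 5 (4 * x - 1) - 693 / 500) (logTaylor 5 (-x))
      (logTaylor 5 x) := by
  have hfactor : sqEntropyGap (81 / 50) x (logTaylor 5 (4 * x - 1) - 693 / 500)
      (logTaylor 5 (-x)) (logTaylor 5 x) = x ^ 2 * (14519 / 18750 - 679 / 100 * x
        + 3017 / 100 * x ^ 2 - 48559 / 600 * x ^ 3 + 121181 / 1000 * x ^ 4 - 155 / 2 * x ^ 5) := by
    simp only [sqEntropyGap, logTaylor_five]
    ring
  rw [hfactor]
  refine mul_nonneg (sq_nonneg x) ?_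
  have hB : 0 ≤ 2 / 5 - x := by linarith
  nlinarith [mul_nonneg (pow_nonneg hx₀ 5) (pow_nonneg hB 0),
    mul_nonneg (pow_nonneg hx₀ 4) (pow_nonneg hB 1), mul_nonneg (pow_nonneg hx₀ 3) (pow_nonneg hB 2),
    mul_nonneg (pow_nonneg hx₀ 2) (pow_nonneg hB 3), mul_nonneg (pow_nonneg hx₀ 1) (pow_nonneg hB 4),
    mul_nonneg (pow_nonneg hx₀ 0) (pow_nonneg hB 5)]

theorem sqEntropyGap_nonneg_of_fifteen_sixteenths_le {x : ℝ} (hx : 15 / 16 ≤ x) (hx₁ : x ≤ 1) :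
    0 ≤ sqEntropyGap (81 / 50) x (x - 1) (-693 / 250) (1733 / 2500 + (x - 1) / 2) := by
  have hfactor : sqEntropyGap (81 / 50) x (x - 1) (-693 / 250) (1733 / 2500 + (x - 1) / 2) =
      (1 - x) * (6447 / 2500 - 7537 / 3125 * x - 3 / 25 * x ^ 2) := by
    simp only [sqEntropyGap]
    ring
  rw [hfactor]
  exact mul_nonneg (by linarith) (by nlinarith)

theorem sqEntropyGap_nonneg_of_sq_eq_add_one {g x ℓ : ℝ} (hg : g ^ 2 = g + 1) (hg₁ : 1.618 ≤ g)
    (hg₂ : g ≤ 1.6181) (hℓ : 12 / 25 ≤ ℓ) (hx₁ : 2 / 5 ≤ x) (hx₂ : x ≤ 15 / 16) :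
    0 ≤ sqEntropyGap g x (logTaylor 5 (g * x - 1) - ℓ) (logTaylor 5 ((g + 1) * (1 - x) - 1) - 2 * ℓ)
      (logTaylor 5 ((g - 1) * (1 + x) - 1) + ℓ) := by
  -- the cofactor is the exact quotient by `(g x - 1)²`, reduced modulo `g² = g + 1`
  have hfactor : sqEntropyGap g x (logTaylor 5 (g * x - 1) - ℓ)
      (logTaylor 5 ((g + 1) * (1 - x) - 1) - 2 * ℓ) (logTaylor 5 ((g - 1) * (1 + x) - 1) + ℓ) =
      (g * x - 1) ^ 2 * (ℓ - 12 / 25 + (892 / 25 - 137 / 6 * g + 191 / 4 * x - 287 / 12 * g * x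
        - 57 / 4 * x ^ 2 - 20 / 3 * g * x ^ 2 - 31 * x ^ 3 + 161 / 4 * g * x ^ 3 - 117 / 4 * x ^ 4
        + 17 / 4 * g * x ^ 4 - 13 / 5 * x ^ 5 + 5 * g * x ^ 5)) := by
    simp only [sqEntropyGap, logTaylor_five]
    grind
  rw [hfactor]
  refine mul_nonneg (sq_nonneg _) ?_
  have hA : 0 ≤ x - 2 / 5 := by linarith
  have hB : 0 ≤ 15 / 16 - x := by linarith
  have hG : 0 ≤ g - 1.618 := by linarith
  nlinarith [mul_nonneg (pow_nonneg hA 5) (pow_nonneg hB 0),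
    mul_nonneg (pow_nonneg hA 4) (pow_nonneg hB 1), mul_nonneg (pow_nonneg hA 3) (pow_nonneg hB 2),
    mul_nonneg (pow_nonneg hA 2) (pow_nonneg hB 3), mul_nonneg (pow_nonneg hA 1) (pow_nonneg hB 4),
    mul_nonneg (pow_nonneg hA 0) (pow_nonneg hB 5),
    mul_nonneg hG (mul_nonneg (pow_nonneg hA 5) (pow_nonneg hB 0)),
    mul_nonneg hG (mul_nonneg (pow_nonneg hA 4) (pow_nonneg hB 1)),
    mul_nonneg hG (mul_nonneg (pow_nonneg hA 3) (pow_nonneg hB 2)),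
    mul_nonneg hG (mul_nonneg (pow_nonneg hA 2) (pow_nonneg hB 3)),
    mul_nonneg hG (mul_nonneg (pow_nonneg hA 1) (pow_nonneg hB 4)),
    mul_nonneg hG (mul_nonneg (pow_nonneg hA 0) (pow_nonneg hB 5))]

theorem mul_binEntropy_le_binEntropy_sq_of_le_two_fifths {x : ℝ} (hx₀ : 0 < x) (hx : x ≤ 2 / 5) :
    81 / 50 * x * binEntropy x ≤ binEntropy (x ^ 2) := by
  refine mul_binEntropy_le_binEntropy_sq_of_log_le (by norm_num) hx₀.le (by linarith) ?_ ?_ ?_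
    (sqEntropyGap_nonneg_of_le_two_fifths hx₀.le hx)
  · have h := log_le_logTaylor_mul_sub_log (n := 5) (by decide) four_pos hx₀
    have hlog4 : log 4 = 2 * log 2 := by
      rw [show (4 : ℝ) = 2 ^ 2 by norm_num, log_pow, Nat.cast_ofNat]
    linarith [log_two_gt_d9]
  · simpa using log_le_logTaylor (n := 5) (by decide) (show 0 < 1 - x by linarith)
  · simpa using log_le_logTaylor (n := 5) (by decide) (show 0 < 1 + x by linarith)

theorem mul_binEntropy_le_binEntropy_sq_of_fifteen_sixteenths_le {x : ℝ} (hx : 15 / 16 ≤ x)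
    (hx₁ : x < 1) : 81 / 50 * x * binEntropy x ≤ binEntropy (x ^ 2) := by
  refine mul_binEntropy_le_binEntropy_sq_of_log_le (by norm_num) (by linarith) hx₁
    (log_le_sub_one_of_pos (by linarith)) ?_ ?_
    (sqEntropyGap_nonneg_of_fifteen_sixteenths_le hx hx₁.le)
  · have h : log (1 - x) ≤ log (2 ^ 4)⁻¹ := log_le_log (by linarith) (by linarith)
    rw [log_inv, log_pow, Nat.cast_ofNat] at h
    linarith [log_two_gt_d9]
  · have h := log_le_sub_one_of_pos (show 0 < (1 + x) / 2 by linarith)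
    rw [log_div (by linarith) two_ne_zero] at h
    linarith [log_two_lt_d9]

theorem goldenRatio_mul_binEntropy_le_binEntropy_sq_of_mem_Icc {x : ℝ} (hx₁ : 2 / 5 ≤ x)
    (hx₂ : x ≤ 15 / 16) : φ * x * binEntropy x ≤ binEntropy (x ^ 2) := by
  have hx₀ : 0 < x := by linarith
  refine mul_binEntropy_le_binEntropy_sq_of_log_le goldenRatio_lt_two.le hx₀.le (by linarith)
    ?_ ?_ ?_ (sqEntropyGap_nonneg_of_sq_eq_add_one goldenRatio_sq goldenRatio_gt_d3.le
      goldenRatio_lt_d4.le log_goldenRatio_gt.le hx₁ hx₂)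
  · exact log_le_logTaylor_mul_sub_log (by decide) goldenRatio_pos hx₀
  · have h := log_le_logTaylor_mul_sub_log (n := 5) (by decide) (k := φ + 1) (by positivity)
      (show 0 < 1 - x by linarith)
    have hk : log (φ + 1) = 2 * log φ := by
      rw [← goldenRatio_sq, log_pow, Nat.cast_ofNat]
    rwa [hk] at h
  · have h := log_le_logTaylor_mul_sub_log (n := 5) (by decide) (k := φ - 1)
      (by linarith [one_lt_goldenRatio]) (show 0 < 1 + x by linarith)
    have hk : log (φ - 1) = -log φ := by
      rw [← inv_goldenRatio_eq_sub_one, log_inv]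
    rwa [hk, sub_neg_eq_add] at h

theorem goldenRatio_mul_binEntropy_le_binEntropy_sq {x : ℝ} (hx₀ : 0 < x) (hx₁ : x < 1) :
    φ * x * binEntropy x ≤ binEntropy (x ^ 2) := by
  have hφ : φ * x * binEntropy x ≤ 81 / 50 * x * binEntropy x := by
    have := binEntropy_pos hx₀ hx₁
    gcongr
    linarith [goldenRatio_lt_d4]
  rcases le_or_gt x (2 / 5) with hx | hx
  · exact hφ.trans (mul_binEntropy_le_binEntropy_sq_of_le_two_fifths hx₀ hx)
  rcases le_or_gt x (15 / 16) with hx' | hx'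
  · exact goldenRatio_mul_binEntropy_le_binEntropy_sq_of_mem_Icc hx.le hx'
  · exact hφ.trans (mul_binEntropy_le_binEntropy_sq_of_fifteen_sixteenths_le hx'.le hx₁)

theorem binEnt_eq_binEntropy_div (x : ℝ) : binEnt x = binEntropy x / log 2 := by
  simp only [binEnt, binEntropy, logb, log_inv]
  ring

/-- The function `x ↦ h(x²)/(x h(x))` on `(0,1)` attains its minimum at `x = φ = (√5-1)/2`,
where its value is `1/φ`. -/
theorem h_frac_min :
    (∀ x ∈ Set.Ioo (0 : ℝ) 1,
      binEnt (x ^ 2) / (x * binEnt x) ≥ 1 / ((Real.sqrt 5 - 1) / 2)) ∧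
    binEnt (((Real.sqrt 5 - 1) / 2) ^ 2) /
        (((Real.sqrt 5 - 1) / 2) * binEnt ((Real.sqrt 5 - 1) / 2)) =
      1 / ((Real.sqrt 5 - 1) / 2) := by
  have hinv : (√5 - 1) / 2 = φ⁻¹ := by
    rw [inv_goldenRatio, goldenConj]
    ring
  have hratio (x : ℝ) :
      binEnt (x ^ 2) / (x * binEnt x) = binEntropy (x ^ 2) / (x * binEntropy x) := by
    rw [binEnt_eq_binEntropy_div, binEnt_eq_binEntropy_div, mul_div_assoc',
      div_div_div_cancel_right₀ (log_pos one_lt_two).ne']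
  simp only [hinv, one_div, inv_inv, hratio]
  refine ⟨fun x ⟨hx₀, hx₁⟩ => ?_, ?_⟩
  · rw [ge_iff_le, le_div_iff₀ (mul_pos hx₀ (binEntropy_pos hx₀ hx₁)), ← mul_assoc]
    exact goldenRatio_mul_binEntropy_le_binEntropy_sq hx₀ hx₁
  · have hsq : φ⁻¹ ^ 2 = 1 - φ⁻¹ := by
      rw [inv_goldenRatio, neg_sq, goldenConj_sq]
      ring
    have hpos := binEntropy_pos (inv_pos.2 goldenRatio_pos) (inv_lt_one_of_one_lt₀ one_lt_goldenRatio)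
    rw [hsq, binEntropy_one_sub, div_mul_cancel_right₀ hpos.ne', inv_inv]
end

section
/- For all x, y ∈ (0,1), one has the strict inequality h(xy) < y·h(x) + x·h(y). -/
private lemma key (x y : ℝ) (hx0 : 0 < x) (hx1 : x < 1) (hy0 : 0 < y) (hy1 : y < 1) :
    y * (1 - x) * Real.log (1 - x) + x * (1 - y) * Real.log (1 - y)
      < (1 - x * y) * Real.log (1 - x * y) := by
  set a := y * (1 - x) with ha
  set b := x * (1 - y) with hb
  set c := (1 - x) * (1 - y) with hc
  have hx1' : 0 < 1 - x := by linarith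
  have hy1' : 0 < 1 - y := by linarith
  have hs : 0 < 1 - x * y := by nlinarith
  have ha0 : 0 < a := mul_pos hy0 hx1'
  have hb0 : 0 < b := mul_pos hx0 hy1'
  have hc0 : 0 < c := mul_pos hx1' hy1'
  set T := a * (1 - x) + b * (1 - y) + c with hT
  have hT0 : 0 < T := by positivity
  set m := T / (1 - x * y) with hm
  have hm0 : 0 < m := div_pos hT0 hs
  have habc : a + b + c = 1 - x * y := by rw [ha, hb, hc]; ring
  have hTs : T < (1 - x * y) ^ 2 := by
    rw [hT, ha, hb, hc]
    nlinarith [mul_pos (mul_pos (mul_pos hx0 hy0) hx1') hy1']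
  have hms : m < 1 - x * y := by
    rw [hm, div_lt_iff₀ hs]; nlinarith
  have hTm : T = m * (1 - x * y) := by
    rw [hm, div_mul_cancel₀ _ hs.ne']
  have h1 : Real.log ((1 - x) / m) ≤ (1 - x) / m - 1 :=
    Real.log_le_sub_one_of_pos (by positivity)
  have h2 : Real.log ((1 - y) / m) ≤ (1 - y) / m - 1 :=
    Real.log_le_sub_one_of_pos (by positivity)
  have h3 : Real.log (1 / m) ≤ 1 / m - 1 :=
    Real.log_le_sub_one_of_pos (by positivity)
  rw [Real.log_div hx1'.ne' hm0.ne'] at h1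
  rw [Real.log_div hy1'.ne' hm0.ne'] at h2
  rw [Real.log_div one_ne_zero hm0.ne', Real.log_one] at h3
  have hsum : a * (Real.log (1 - x) - Real.log m) + b * (Real.log (1 - y) - Real.log m)
      + c * (0 - Real.log m) ≤ a * ((1 - x) / m - 1) + b * ((1 - y) / m - 1) + c * (1 / m - 1) := by
    gcongr
  have hrhs : a * ((1 - x) / m - 1) + b * ((1 - y) / m - 1) + c * (1 / m - 1) = 0 := by
    have : a * ((1 - x) / m - 1) + b * ((1 - y) / m - 1) + c * (1 / m - 1)
        = T / m - (a + b + c) := by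
      rw [hT]; field_simp; ring
    rw [this, habc, hTm, mul_comm, mul_div_assoc, div_self hm0.ne', mul_one, sub_self]
  rw [hrhs] at hsum
  have hsum' : a * Real.log (1 - x) + b * Real.log (1 - y) ≤ (1 - x * y) * Real.log m := by
    rw [← habc]; ring_nf; ring_nf at hsum; linarith
  have hfin : (1 - x * y) * Real.log m < (1 - x * y) * Real.log (1 - x * y) :=
    mul_lt_mul_of_pos_left (Real.log_lt_log hm0 hms) hs
  calc y * (1 - x) * Real.log (1 - x) + x * (1 - y) * Real.log (1 - y)
      = a * Real.log (1 - x) + b * Real.log (1 - y) := by rw [ha, hb]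
    _ ≤ (1 - x * y) * Real.log m := hsum'
    _ < (1 - x * y) * Real.log (1 - x * y) := hfin

/-- For `x, y ∈ (0,1)` one has the strict inequality `h(xy) < y h(x) + x h(y)`. -/
theorem h_strict_subadditive (x y : ℝ) (hx : x ∈ Set.Ioo (0 : ℝ) 1)
    (hy : y ∈ Set.Ioo (0 : ℝ) 1) :
    binEnt (x * y) < y * binEnt x + x * binEnt y := by
  obtain ⟨hx0, hx1⟩ := hx
  obtain ⟨hy0, hy1⟩ := hy
  have hk := key x y hx0 hx1 hy0 hy1
  have hL2 : (0:ℝ) < Real.log 2 := Real.log_pos (by norm_num)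
  have hlog : Real.log (x * y) = Real.log x + Real.log y :=
    Real.log_mul hx0.ne' hy0.ne'
  simp only [binEnt, Real.logb, hlog]
  rw [← sub_pos]
  have heq : y * (-(x * (Real.log x / Real.log 2)) - (1 - x) * (Real.log (1 - x) / Real.log 2))
      + x * (-(y * (Real.log y / Real.log 2)) - (1 - y) * (Real.log (1 - y) / Real.log 2))
      - (-(x * y * ((Real.log x + Real.log y) / Real.log 2))
        - (1 - x * y) * (Real.log (1 - x * y) / Real.log 2))
      = ((1 - x * y) * Real.log (1 - x * y)
        - (y * (1 - x) * Real.log (1 - x) + x * (1 - y) * Real.log (1 - y))) / Real.log 2 := by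
    field_simp
    ring
  rw [heq]
  exact div_pos (by linarith [hk]) hL2
end

section
/- Define f(x,y) = h(xy)/(h(x)·y + h(y)·x) for (x,y) ∈ (0,1)². If (x*, y*) ∈ (0,1)² is a point at which f attains its minimum over (0,1)², then x* = y*. -/
/-!
Write `g(t) = h(t)/t`. The denominator of `f` is `xy (g x + g y)`, and `u ↦ g(eᵘ)` is strictly
concave on `u < 0`, so `g x + g y < 2 g(√(xy))` unless `x = y`. Hence off the diagonal,
moving `(x, y)` to `(√(xy), √(xy))` keeps the numerator `h(xy)` and strictly increases the
denominator, strictly decreasing `f`.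
-/

open Real Set Filter Topology

theorem binEnt_pos {t : ℝ} (ht : t ∈ Ioo (0 : ℝ) 1) : 0 < binEnt t := by
  obtain ⟨h0, h1⟩ := ht
  have hlog : logb 2 t < 0 := logb_neg one_lt_two h0 h1
  have hlog' : logb 2 (1 - t) < 0 := logb_neg one_lt_two (by linarith) (by linarith)
  unfold binEnt
  nlinarith

theorem Real.one_sub_inv_lt_log_of_pos {x : ℝ} (hx : 0 < x) (hx1 : x ≠ 1) : 1 - x⁻¹ < log x := by
  have := log_lt_sub_one_of_pos (inv_pos.mpr hx) (inv_ne_one.mpr hx1)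
  rw [log_inv] at this
  linarith

/-- `h(eᵘ) / eᵘ`, measured in nats. -/
noncomputable def entropyRatioExp (u : ℝ) : ℝ :=
  -u - (exp (-u) - 1) * log (1 - exp u)

theorem mul_entropyRatioExp_log {t : ℝ} (ht : 0 < t) :
    t * entropyRatioExp (log t) = binEnt t * log 2 := by
  have hl2 : log 2 ≠ 0 := by positivity
  rw [entropyRatioExp, exp_log ht, exp_neg, exp_log ht]
  unfold binEnt logb
  field_simp

theorem one_sub_exp_ne_zero {u : ℝ} (hu : u ≠ 0) : 1 - exp u ≠ 0 :=
  sub_ne_zero.mpr fun h => hu ((exp_eq_one_iff u).mp h.symm)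

theorem hasDerivAt_log_one_sub_exp {u : ℝ} (hu : u ≠ 0) :
    HasDerivAt (fun v => log (1 - exp v)) (-exp u / (1 - exp u)) u := by
  simpa using ((hasDerivAt_exp u).const_sub 1).log (one_sub_exp_ne_zero hu)

theorem hasDerivAt_entropyRatioExp {u : ℝ} (hu : u ≠ 0) :
    HasDerivAt entropyRatioExp (exp (-u) * log (1 - exp u)) u := by
  have hne := one_sub_exp_ne_zero hu
  refine ((hasDerivAt_neg u).sub (((hasDerivAt_neg u).exp.sub_const 1).mul
    (hasDerivAt_log_one_sub_exp hu))).congr_deriv ?_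
  rw [exp_neg]
  field_simp
  ring

theorem hasDerivAt_exp_neg_mul_log_one_sub_exp {u : ℝ} (hu : u ≠ 0) :
    HasDerivAt (fun v => exp (-v) * log (1 - exp v))
      (-exp (-u) * log (1 - exp u) - 1 / (1 - exp u)) u := by
  have hne := one_sub_exp_ne_zero hu
  refine ((hasDerivAt_neg u).exp.mul (hasDerivAt_log_one_sub_exp hu)).congr_deriv ?_
  rw [exp_neg]
  field_simp
  ring

theorem neg_exp_neg_mul_log_one_sub_exp_sub_lt_zero {u : ℝ} (hu : u < 0) :
    -exp (-u) * log (1 - exp u) - 1 / (1 - exp u) < 0 := by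
  set t := exp u
  have ht : 0 < t := exp_pos u
  have ht1 : 0 < 1 - t := sub_pos.mpr (exp_lt_one_iff.mpr hu)
  have hlog : 1 - (1 - t)⁻¹ < log (1 - t) :=
    one_sub_inv_lt_log_of_pos ht1 (by linarith)
  have hlog' : -log (1 - t) * (1 - t) - t < 0 := by
    have := mul_lt_mul_of_pos_right hlog ht1
    rw [sub_mul, inv_mul_cancel₀ ht1.ne'] at this
    linarith
  have hform : -exp (-u) * log (1 - t) - 1 / (1 - t) =
      (-log (1 - t) * (1 - t) - t) / (t * (1 - t)) := by
    rw [exp_neg]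
    field_simp
    ring
  rw [hform]
  exact div_neg_of_neg_of_pos hlog' (mul_pos ht ht1)

theorem strictConcaveOn_entropyRatioExp : StrictConcaveOn ℝ (Iio 0) entropyRatioExp := by
  refine strictConcaveOn_of_deriv2_neg (convex_Iio 0)
    (fun u hu => (hasDerivAt_entropyRatioExp hu.ne).continuousAt.continuousWithinAt) fun u hu => ?_
  rw [interior_Iio] at hu
  have hderiv : deriv entropyRatioExp =ᶠ[𝓝 u] fun v => exp (-v) * log (1 - exp v) :=
    eventually_of_mem (Iio_mem_nhds hu) fun v hv => (hasDerivAt_entropyRatioExp (ne_of_lt hv)).deriv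
  rw [Function.iterate_succ_apply, Function.iterate_one, hderiv.deriv_eq,
    (hasDerivAt_exp_neg_mul_log_one_sub_exp hu.ne).deriv]
  exact neg_exp_neg_mul_log_one_sub_exp_sub_lt_zero hu

theorem binEnt_mul_add_binEnt_mul_lt_sqrt {x y : ℝ} (hx : x ∈ Ioo (0 : ℝ) 1)
    (hy : y ∈ Ioo (0 : ℝ) 1) (hxy : x ≠ y) :
    binEnt x * y + binEnt y * x < 2 * (binEnt √(x * y) * √(x * y)) := by
  obtain ⟨hx0, hx1⟩ := hx
  obtain ⟨hy0, hy1⟩ := hy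
  set s := √(x * y)
  have hs : 0 < s := sqrt_pos.mpr (mul_pos hx0 hy0)
  have hss : s * s = x * y := mul_self_sqrt (mul_pos hx0 hy0).le
  have hlog_s : log s = (1 / 2 : ℝ) • log x + (1 / 2 : ℝ) • log y := by
    rw [log_sqrt (mul_pos hx0 hy0).le, log_mul hx0.ne' hy0.ne', smul_eq_mul, smul_eq_mul]
    ring
  have hconc := strictConcaveOn_entropyRatioExp.2 (log_neg hx0 hx1) (log_neg hy0 hy1)
    (fun h => hxy (log_injOn_pos hx0 hy0 h)) one_half_pos one_half_pos (add_halves 1)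
  rw [← hlog_s, smul_eq_mul, smul_eq_mul] at hconc
  have hl2 : 0 < log 2 := by positivity
  refine lt_of_mul_lt_mul_right ?_ hl2.le
  calc (binEnt x * y + binEnt y * x) * log 2
      = x * y * (entropyRatioExp (log x) + entropyRatioExp (log y)) := by
        linear_combination -y * mul_entropyRatioExp_log hx0 - x * mul_entropyRatioExp_log hy0
    _ < x * y * (2 * entropyRatioExp (log s)) :=
        mul_lt_mul_of_pos_left (by linarith) (mul_pos hx0 hy0)
    _ = 2 * (binEnt s * s) * log 2 := by
        linear_combination
          (-2 * entropyRatioExp (log s)) * hss + 2 * s * mul_entropyRatioExp_log hs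

/-- If `f(x,y) = h(xy)/(h(x)·y + h(y)·x)` attains its minimum over `(0,1)²` at `(x*, y*)`,
then `x* = y*`. -/
theorem min_on_diagonal (x y : ℝ) (hx : x ∈ Set.Ioo (0 : ℝ) 1) (hy : y ∈ Set.Ioo (0 : ℝ) 1)
    (hmin : ∀ a ∈ Set.Ioo (0 : ℝ) 1, ∀ b ∈ Set.Ioo (0 : ℝ) 1,
      binEnt (x * y) / (binEnt x * y + binEnt y * x) ≤
        binEnt (a * b) / (binEnt a * b + binEnt b * a)) :
    x = y := by
  by_contra hxy
  have hxy_mem : x * y ∈ Ioo (0 : ℝ) 1 :=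
    ⟨mul_pos hx.1 hy.1, mul_lt_one_of_nonneg_of_lt_one_left hx.1.le hx.2 hy.2.le⟩
  have hs : √(x * y) ∈ Ioo (0 : ℝ) 1 :=
    ⟨sqrt_pos.mpr hxy_mem.1, sqrt_one ▸ sqrt_lt_sqrt hxy_mem.1.le hxy_mem.2⟩
  have hdenom_pos : 0 < binEnt x * y + binEnt y * x :=
    add_pos (mul_pos (binEnt_pos hx) hy.1) (mul_pos (binEnt_pos hy) hx.1)
  have hmin_s := hmin _ hs _ hs
  rw [mul_self_sqrt hxy_mem.1.le] at hmin_s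
  refine hmin_s.not_gt (div_lt_div_of_pos_left (binEnt_pos hxy_mem) hdenom_pos ?_)
  linarith [binEnt_mul_add_binEnt_mul_lt_sqrt hx hy hxy]
end
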